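/- For all integers l ≥ m ≥ n ≥ 1, the uniform averages over order-preserving surjections compose to a uniform average: Q_{m,n} * Q_{l,m} = Q_{l,n} in K[Part(l,n)]. In particular, the element P_{m,n} defined by P_{n,n} = δ_{(1^n)}, P_{m,m−1} = δ_{(2,1^{m−2})} and P_{m,n} = P_{n+1,n} * P_{n+2,n+1} * … * P_{m,m−1} satisfies P_{m,n} = Q_{m,n}. -/

import Mathlib

/-
Expanding bilinearly, and using that `δ_λ * δ_μ` does not depend on the representatives,
`Q_{m,n} * Q_{l,m}` is the average of `δ_{proj (s ∘ σ ∘ t)}` over order-preserving `s`, `t` and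
`σ ∈ S_m`. Sorting `σ ∘ t` gives an order-preserving `t'` with `proj (s ∘ t') = proj (s ∘ σ ∘ t)`,
and `t ↦ sort (σ ∘ t)` permutes the order-preserving surjections, so `σ` drops out. Finally every
order-preserving surjection `u : l → n` is `s ∘ t` for exactly `C(l - n, m - n)` pairs: such a map
is determined by the set of first points of its blocks, `u = s ∘ t` means that the blocks of `t`
refine those of `u`, and `t` is then determined by the `m - n` block starts it adds to those of
`u`. Hence the average is uniform over the order-preserving surjections `l → n`.
The claim about `P` follows by induction from `Q_{n,n} = δ_{(1^n)}` and
`Q_{m+1,m} = δ_{(2,1^{m-1})}`.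
-/

open Finset

/-- The multiset of fiber cardinalities of a map `f : Fin a → Fin b`. -/
def proj {a b : ℕ} (f : Fin a → Fin b) : Multiset ℕ :=
  Multiset.map (fun i : Fin b => (Finset.univ.filter fun j => f j = i).card)
    (Finset.univ : Finset (Fin b)).val

/-- The composite `δ_{proj f} * δ_{proj g} = (1/m!) Σ_{σ ∈ S_m} δ_{proj (f∘σ∘g)}`,
for representatives `f : Fin m → Fin n` and `g : Fin l → Fin m`, with values in the
free `K`-vector space on multisets of natural numbers (in which the free vector
space `K[Part(l,n)]` on partitions embeds). -/
noncomputable def starElt (K : Type) [Field K] {l m n : ℕ}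
    (f : Fin m → Fin n) (g : Fin l → Fin m) : Multiset ℕ →₀ K :=
  (m.factorial : K)⁻¹ •
    ∑ σ : Equiv.Perm (Fin m), Finsupp.single (proj (f ∘ ⇑σ ∘ g)) (1 : K)

/-- `δ_λ * δ_μ`, defined via a choice of representatives (independent of the choice). -/
noncomputable def starOf (K : Type) [Field K] (m n l : ℕ) (lam mu : Multiset ℕ) :
    Multiset ℕ →₀ K :=
  if h : (∃ f : Fin m → Fin n, Function.Surjective f ∧ proj f = lam) ∧
      (∃ g : Fin l → Fin m, Function.Surjective g ∧ proj g = mu) then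
    starElt K h.1.choose h.2.choose
  else 0

/-- The composition `* : K[Part(m,n)] × K[Part(l,m)] → K[Part(l,n)]`, as the bilinear
extension of `δ_λ * δ_μ = (1/m!) Σ_{σ ∈ S_m} δ_{proj (f∘σ∘g)}` (representatives
`proj f = λ`, `proj g = μ`). -/
noncomputable def starComp (K : Type) [Field K] (m n l : ℕ)
    (x y : Multiset ℕ →₀ K) : Multiset ℕ →₀ K :=
  ∑ a ∈ x.support, ∑ b ∈ y.support, (x a * y b) • starOf K m n l a b

/-- The set of order-preserving surjections `Fin m → Fin n`. -/
noncomputable def OSurj (m n : ℕ) : Finset (Fin m → Fin n) :=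
  open scoped Classical in
  Finset.univ.filter fun s => Monotone s ∧ Function.Surjective s

/-- `Q_{m,n}`, the uniform average of the `δ_{proj s}` over order-preserving
surjections `s : Fin m → Fin n`. -/
noncomputable def Q (K : Type) [Field K] (m n : ℕ) : Multiset ℕ →₀ K :=
  ((OSurj m n).card : K)⁻¹ • ∑ s ∈ OSurj m n, Finsupp.single (proj s) (1 : K)

/-- `Ppart K n k = P_{n+k,n}` where `P_{n,n} = δ_{(1^n)}`,
`P_{m+1,n} = P_{m,n} * δ_{(2,1^{m-1})}` (so `P_{m,n} = P_{n+1,n} * … * P_{m,m−1}`). -/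
noncomputable def Ppart (K : Type) [Field K] (n : ℕ) : ℕ → (Multiset ℕ →₀ K)
  | 0 => Finsupp.single (Multiset.replicate n 1) 1
  | k + 1 => starComp K (n + k) n (n + k + 1) (Ppart K n k)
      (Finsupp.single (2 ::ₘ Multiset.replicate (n + k - 1) 1) 1)

/-- The monoidal product `⊙ : K[Part(m,n)] × K[Part(m',n')] → K[Part(m+m',n+n')]`,
bilinear extension of `δ_λ ⊙ δ_μ = (−1)^{(m−n)n'} Q_{m+m',n+n'}`. -/
noncomputable def odot (K : Type) [Field K] (m n m' n' : ℕ)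
    (x y : Multiset ℕ →₀ K) : Multiset ℕ →₀ K :=
  ∑ a ∈ x.support, ∑ b ∈ y.support,
    (x a * y b) • ((-1 : K) ^ ((m - n) * n') • Q K (m + m') (n + n'))

open Function

lemma exists_perm_comp_eq {α γ : Type*} [Fintype α] [DecidableEq γ] {f g : α → γ}
    (h : ∀ c, #{x | f x = c} = #{x | g x = c}) : ∃ σ : Equiv.Perm α, g ∘ σ = f := by
  have e : ∀ c, {x // f x = c} ≃ {x // g x = c} := fun c =>
    Fintype.equivOfCardEq (by simpa only [Fintype.card_subtype] using h c)
  exact ⟨Equiv.ofFiberEquiv e, funext (Equiv.ofFiberEquiv_map e)⟩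

section Fibers

variable {a b : ℕ}

def fiberCard (f : Fin a → Fin b) (i : Fin b) : ℕ := #{j | f j = i}

lemma proj_eq_map_fiberCard (f : Fin a → Fin b) :
    proj f = Multiset.map (fiberCard f) (univ : Finset (Fin b)).val := rfl

lemma card_proj (f : Fin a → Fin b) : Multiset.card (proj f) = b := by
  simp [proj_eq_map_fiberCard]

lemma sum_fiberCard (f : Fin a → Fin b) : ∑ i, fiberCard f i = a := by
  simp only [fiberCard]
  rw [← card_eq_sum_card_fiberwise fun x _ => mem_univ (f x), card_univ, Fintype.card_fin]

lemma sum_proj (f : Fin a → Fin b) : (proj f).sum = a :=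
  sum_fiberCard f

lemma one_le_of_mem_proj {f : Fin a → Fin b} (hf : Surjective f) {k : ℕ} (hk : k ∈ proj f) :
    1 ≤ k := by
  obtain ⟨i, -, rfl⟩ := Multiset.mem_map.1 hk
  obtain ⟨x, rfl⟩ := hf i
  exact card_pos.2 ⟨x, by simp⟩

lemma count_proj (f : Fin a → Fin b) (k : ℕ) :
    (proj f).count k = #{i | fiberCard f i = k} := by
  rw [proj_eq_map_fiberCard, Multiset.count_map, ← card_val, filter_val]
  simp only [eq_comm]

lemma proj_comp_perm (f : Fin a → Fin b) (τ : Equiv.Perm (Fin a)) : proj (f ∘ τ) = proj f := by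
  have h : fiberCard (f ∘ τ) = fiberCard f := funext fun i =>
    card_equiv τ (by simp)
  rw [proj_eq_map_fiberCard, h]
  rfl

lemma proj_perm_comp (f : Fin a → Fin b) (π : Equiv.Perm (Fin b)) : proj (π ∘ f) = proj f := by
  have h : fiberCard (π ∘ f) = fiberCard f ∘ π.symm := funext fun i => by
    simp [fiberCard, Equiv.eq_symm_apply]
  rw [proj_eq_map_fiberCard, h, ← Multiset.map_map, Multiset.map_univ_val_equiv,
    proj_eq_map_fiberCard]

lemma exists_perm_comp_perm_eq {f g : Fin a → Fin b} (h : proj f = proj g) :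
    ∃ (π : Equiv.Perm (Fin b)) (τ : Equiv.Perm (Fin a)), π ∘ f ∘ τ = g := by
  obtain ⟨π, hπ⟩ : ∃ π : Equiv.Perm (Fin b), fiberCard f ∘ π = fiberCard g :=
    exists_perm_comp_eq fun k => by rw [← count_proj, ← count_proj, h]
  obtain ⟨τ, hτ⟩ : ∃ τ : Equiv.Perm (Fin a), (π.symm ∘ f) ∘ τ = g := by
    refine exists_perm_comp_eq fun i => ?_
    change fiberCard g i = #{x | π.symm (f x) = i}
    simp only [Equiv.symm_apply_eq]
    exact (congrFun hπ i).symm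
  exact ⟨π.symm, τ, hτ⟩

end Fibers

section WellDefined

variable (K : Type) [Field K] {l m n : ℕ}

lemma starElt_perm_comp_perm (f : Fin m → Fin n) (g : Fin l → Fin m) (π : Equiv.Perm (Fin n))
    (τ ρ : Equiv.Perm (Fin m)) (θ : Equiv.Perm (Fin l)) :
    starElt K (π ∘ f ∘ τ) (ρ ∘ g ∘ θ) = starElt K f g := by
  unfold starElt
  congr 1
  conv_rhs => rw [← ((Equiv.mulRight ρ).trans (Equiv.mulLeft τ)).sum_comp]
  refine Fintype.sum_congr _ _ fun σ => ?_
  have h : (π ∘ f ∘ τ) ∘ σ ∘ ρ ∘ g ∘ θ = π ∘ (f ∘ ⇑(τ * (σ * ρ)) ∘ g) ∘ θ := by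
    ext x; simp
  simp only [h, proj_perm_comp, proj_comp_perm, Equiv.trans_apply, Equiv.coe_mulRight,
    Equiv.coe_mulLeft]

lemma starElt_congr {f f' : Fin m → Fin n} {g g' : Fin l → Fin m}
    (hf : proj f = proj f') (hg : proj g = proj g') : starElt K f g = starElt K f' g' := by
  obtain ⟨π, τ, rfl⟩ := exists_perm_comp_perm_eq hf
  obtain ⟨ρ, θ, rfl⟩ := exists_perm_comp_perm_eq hg
  exact (starElt_perm_comp_perm K f g π τ ρ θ).symm

lemma starOf_proj_proj {f : Fin m → Fin n} {g : Fin l → Fin m} (hf : Surjective f)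
    (hg : Surjective g) : starOf K m n l (proj f) (proj g) = starElt K f g := by
  have h : (∃ f' : Fin m → Fin n, Surjective f' ∧ proj f' = proj f) ∧
      (∃ g' : Fin l → Fin m, Surjective g' ∧ proj g' = proj g) :=
    ⟨⟨f, hf, rfl⟩, ⟨g, hg, rfl⟩⟩
  rw [starOf, dif_pos h]
  exact starElt_congr K h.1.choose_spec.2 h.2.choose_spec.2

end WellDefined

section OrderPreserving

variable {l m n : ℕ}

lemma mem_OSurj {s : Fin m → Fin n} : s ∈ OSurj m n ↔ Monotone s ∧ Surjective s := by
  simp [OSurj]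

lemma OSurj_nonempty (hn : 1 ≤ n) (hm : n ≤ m) : (OSurj m n).Nonempty := by
  refine ⟨fun x => ⟨min x (n - 1), by omega⟩, mem_OSurj.2 ⟨fun x y hxy => ?_, fun i => ?_⟩⟩
  · simp only [Fin.mk_le_mk]
    exact min_le_min_right _ hxy
  · exact ⟨⟨i, by omega⟩, Fin.ext (by simp; omega)⟩

lemma comp_mem_OSurj {s : Fin m → Fin n} {t : Fin l → Fin m} (hs : s ∈ OSurj m n)
    (ht : t ∈ OSurj l m) : s ∘ t ∈ OSurj l n := by
  rw [mem_OSurj] at *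
  exact ⟨hs.1.comp ht.1, hs.2.comp ht.2⟩

end OrderPreserving

section Bilinear

variable (K : Type) [Field K] {l m n : ℕ}

lemma starComp_eq_linearCombination (x y : Multiset ℕ →₀ K) :
    starComp K m n l x y = Finsupp.linearCombination K
      (fun a => Finsupp.linearCombination K (starOf K m n l a) y) x := by
  simp [starComp, Finsupp.linearCombination_apply, Finsupp.sum, Finset.smul_sum, mul_smul]

lemma linearCombination_Q {M : Type*} [AddCommMonoid M] [Module K M] (v : Multiset ℕ → M) :
    Finsupp.linearCombination K v (Q K m n) =
      (#(OSurj m n) : K)⁻¹ • ∑ s ∈ OSurj m n, v (proj s) := by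
  simp [Q, map_sum]

lemma starComp_Q_Q_eq_sum_starElt : starComp K m n l (Q K m n) (Q K l m) =
    ((#(OSurj m n) : K) * #(OSurj l m))⁻¹ • ∑ s ∈ OSurj m n, ∑ t ∈ OSurj l m, starElt K s t := by
  simp only [starComp_eq_linearCombination, linearCombination_Q, smul_sum, mul_inv, mul_smul]
  refine sum_congr rfl fun s hs => sum_congr rfl fun t ht => ?_
  rw [starOf_proj_proj K (mem_OSurj.1 hs).2 (mem_OSurj.1 ht).2]

end Bilinear

section Sorting

variable {a b : ℕ}

noncomputable def sortedTuple (g : Fin a → Fin b) : Fin a → Fin b := g ∘ Tuple.sort g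

lemma sortedTuple_mem_OSurj {g : Fin a → Fin b} (hg : Surjective g) :
    sortedTuple g ∈ OSurj a b :=
  mem_OSurj.2 ⟨Tuple.monotone_sort g, hg.comp (Equiv.surjective _)⟩

lemma sortedTuple_comp_perm (g : Fin a → Fin b) (τ : Equiv.Perm (Fin a)) :
    sortedTuple (g ∘ τ) = sortedTuple g :=
  Tuple.comp_perm_comp_sort_eq_comp_sort

lemma sortedTuple_eq_self {g : Fin a → Fin b} (hg : Monotone g) : sortedTuple g = g := by
  rw [sortedTuple, Tuple.sort_eq_refl_iff_monotone.2 hg]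
  rfl

lemma sortedTuple_perm_comp_sortedTuple {t : Fin a → Fin b} (ht : Monotone t)
    (σ : Equiv.Perm (Fin b)) : sortedTuple (σ.symm ∘ sortedTuple (σ ∘ t)) = t := by
  have h : σ.symm ∘ sortedTuple (σ ∘ t) = t ∘ Tuple.sort (σ ∘ t) := by
    ext x; simp [sortedTuple]
  rw [h, sortedTuple_comp_perm, sortedTuple_eq_self ht]

end Sorting

section Permutations

variable {l m n : ℕ}

/-- Post-composing with `σ` and re-sorting is a bijection of `OSurj l m` that does not change
the fibre sizes of `s ∘ t`. -/
lemma sum_OSurj_proj_comp_perm_comp {γ : Type*} [AddCommMonoid γ] (F : Multiset ℕ → γ)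
    (s : Fin m → Fin n) (σ : Equiv.Perm (Fin m)) :
    ∑ t ∈ OSurj l m, F (proj (s ∘ σ ∘ t)) = ∑ t ∈ OSurj l m, F (proj (s ∘ t)) := by
  refine sum_nbij' (fun t => sortedTuple (σ ∘ t)) (fun t => sortedTuple (σ.symm ∘ t))
    (fun t ht => sortedTuple_mem_OSurj (σ.surjective.comp (mem_OSurj.1 ht).2))
    (fun t ht => sortedTuple_mem_OSurj (σ.symm.surjective.comp (mem_OSurj.1 ht).2))
    (fun t ht => sortedTuple_perm_comp_sortedTuple (mem_OSurj.1 ht).1 σ)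
    (fun t ht => by simpa using sortedTuple_perm_comp_sortedTuple (mem_OSurj.1 ht).1 σ.symm)
    fun t _ => ?_
  rw [sortedTuple, ← comp_assoc, ← comp_assoc, proj_comp_perm]
  rfl

lemma sum_starElt_OSurj (K : Type) [Field K] [CharZero K] (s : Fin m → Fin n) :
    ∑ t ∈ OSurj l m, starElt K s t = ∑ t ∈ OSurj l m, Finsupp.single (proj (s ∘ t)) 1 := by
  simp only [starElt, ← smul_sum]
  rw [sum_comm, sum_congr rfl fun σ _ =>
    sum_OSurj_proj_comp_perm_comp (fun μ => Finsupp.single μ (1 : K)) s σ, sum_const,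
    card_univ, Fintype.card_perm, Fintype.card_fin, ← Nat.cast_smul_eq_nsmul K, smul_smul,
    inv_mul_cancel₀ (Nat.cast_ne_zero.2 m.factorial_ne_zero), one_smul]

end Permutations

section Starts

variable {a b c : ℕ}

def starts (t : Fin a → Fin b) : Finset (Fin a) := {x | ∀ y < x, t y ≠ t x}

lemma zero_mem_starts [NeZero a] (t : Fin a → Fin b) : 0 ∈ starts t := by
  simp [starts]

lemma injOn_starts (t : Fin a → Fin b) : Set.InjOn t (starts t) := by
  intro x hx y hy hxy
  simp only [starts, mem_coe, mem_filter, mem_univ, true_and] at hx hy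
  by_contra hne
  rcases lt_or_gt_of_ne hne with hlt | hlt
  · exact hy x hlt hxy
  · exact hx y hlt hxy.symm

lemma exists_mem_starts_le_apply_eq (t : Fin a → Fin b) (x : Fin a) :
    ∃ z ∈ starts t, z ≤ x ∧ t z = t x := by
  obtain ⟨z, hz, hmin⟩ := exists_min_image {y | t y = t x} id ⟨x, by simp⟩
  simp only [mem_filter, mem_univ, true_and, id] at hz hmin
  refine ⟨z, ?_, hmin x rfl, hz⟩
  simp only [starts, mem_filter, mem_univ, true_and]
  exact fun y hy hyz => (hy.trans_le (hmin y (hyz.trans hz))).false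

lemma image_starts {t : Fin a → Fin b} (ht : Surjective t) : (starts t).image t = univ := by
  refine eq_univ_of_forall fun i => ?_
  obtain ⟨x, rfl⟩ := ht i
  obtain ⟨z, hz, -, hzx⟩ := exists_mem_starts_le_apply_eq t x
  exact mem_image.2 ⟨z, hz, hzx⟩

lemma card_starts {t : Fin a → Fin b} (ht : Surjective t) : #(starts t) = b := by
  rw [← card_image_of_injOn (injOn_starts t), image_starts ht, card_univ, Fintype.card_fin]

lemma image_starts_filter_le {t : Fin a → Fin b} (hm : Monotone t) (hs : Surjective t)
    (x : Fin a) : {z ∈ starts t | z ≤ x}.image t = Iic (t x) := by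
  ext i
  simp only [mem_image, mem_filter, mem_Iic]
  constructor
  · rintro ⟨z, ⟨-, hzx⟩, rfl⟩
    exact hm hzx
  · intro hi
    obtain ⟨y, rfl⟩ := hs i
    obtain ⟨z, hz, -, hzy⟩ := exists_mem_starts_le_apply_eq t y
    refine ⟨z, ⟨hz, le_of_not_gt fun hxz => ?_⟩, hzy⟩
    have htx : t x = t z := le_antisymm (hm hxz.le) (hzy ▸ hi)
    exact (mem_filter.1 hz).2 x hxz htx

lemma card_starts_filter_le {t : Fin a → Fin b} (hm : Monotone t) (hs : Surjective t)
    (x : Fin a) : #{z ∈ starts t | z ≤ x} = t x + 1 := by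
  rw [← card_image_of_injOn ((injOn_starts t).mono (filter_subset _ _)),
    image_starts_filter_le hm hs, Fin.card_Iic]

lemma filter_le_eq_of_card_eq {α : Type*} [LinearOrder α] (S : Finset α) {x y : α}
    (h : #{z ∈ S | z ≤ x} = #{z ∈ S | z ≤ y}) : {z ∈ S | z ≤ x} = {z ∈ S | z ≤ y} := by
  rcases le_total x y with hxy | hxy
  · exact eq_of_subset_of_card_le (monotone_filter_right S fun z _ hz => hz.trans hxy) h.ge
  · exact (eq_of_subset_of_card_le (monotone_filter_right S fun z _ hz => hz.trans hxy) h.le).symm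

lemma apply_eq_apply_iff_filter_starts {t : Fin a → Fin b} (hm : Monotone t) (hs : Surjective t)
    {x y : Fin a} : t x = t y ↔ {z ∈ starts t | z ≤ x} = {z ∈ starts t | z ≤ y} := by
  constructor
  · intro h
    refine filter_le_eq_of_card_eq _ ?_
    rw [card_starts_filter_le hm hs, card_starts_filter_le hm hs, h]
  · intro h
    have := congrArg card h
    rw [card_starts_filter_le hm hs, card_starts_filter_le hm hs] at this
    exact Fin.ext (by omega)

lemma eq_of_starts_eq {t t' : Fin a → Fin b} (hm : Monotone t) (hs : Surjective t)
    (hm' : Monotone t') (hs' : Surjective t') (h : starts t = starts t') : t = t' := by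
  funext x
  have := card_starts_filter_le hm hs x
  rw [h, card_starts_filter_le hm' hs'] at this
  exact Fin.ext (by omega)

lemma starts_subset_of_factors {t : Fin a → Fin b} {u : Fin a → Fin c}
    (h : ∀ x y, t x = t y → u x = u y) : starts u ⊆ starts t := by
  intro x hx
  simp only [starts, mem_filter, mem_univ, true_and] at hx ⊢
  exact fun y hy hty => hx y hy (h y x hty)

lemma factors_of_starts_subset {t : Fin a → Fin b} {u : Fin a → Fin c}
    (ht : Monotone t) (ht' : Surjective t) (hu : Monotone u) (hu' : Surjective u)
    (h : starts u ⊆ starts t) {x y : Fin a} (hxy : t x = t y) : u x = u y := by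
  rw [apply_eq_apply_iff_filter_starts ht ht'] at hxy
  rw [apply_eq_apply_iff_filter_starts hu hu']
  ext z
  have hz := Finset.ext_iff.1 hxy z
  simp only [mem_filter] at hz ⊢
  constructor
  · exact fun hzx => ⟨hzx.1, (hz.1 ⟨h hzx.1, hzx.2⟩).2⟩
  · exact fun hzy => ⟨hzy.1, (hz.2 ⟨h hzy.1, hzy.2⟩).2⟩

end Starts

section OfStarts

variable {a b : ℕ} [NeZero a]

lemma one_le_card_filter_le {S : Finset (Fin a)} (h0 : 0 ∈ S) (x : Fin a) :
    1 ≤ #{z ∈ S | z ≤ x} :=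
  card_pos.2 ⟨0, mem_filter.2 ⟨h0, Fin.zero_le x⟩⟩

def ofStarts (S : Finset (Fin a)) (h0 : 0 ∈ S) (hS : #S = b) (x : Fin a) : Fin b :=
  ⟨#{z ∈ S | z ≤ x} - 1, by
    have := one_le_card_filter_le h0 x
    have := hS ▸ card_filter_le S (· ≤ x)
    omega⟩

variable {S : Finset (Fin a)} (h0 : 0 ∈ S) (hS : #S = b)

lemma ofStarts_val_add_one (x : Fin a) : (ofStarts S h0 hS x : ℕ) + 1 = #{z ∈ S | z ≤ x} := by
  have := one_le_card_filter_le h0 x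
  simp only [ofStarts]
  omega

lemma ofStarts_eq_iff {x y : Fin a} :
    ofStarts S h0 hS x = ofStarts S h0 hS y ↔ {z ∈ S | z ≤ x} = {z ∈ S | z ≤ y} := by
  refine ⟨fun h => filter_le_eq_of_card_eq S ?_, fun h => Fin.ext ?_⟩
  · rw [← ofStarts_val_add_one h0 hS, ← ofStarts_val_add_one h0 hS, h]
  · have := ofStarts_val_add_one h0 hS x
    rw [h, ← ofStarts_val_add_one h0 hS y] at this
    omega

lemma monotone_ofStarts : Monotone (ofStarts S h0 hS) := by
  intro x y hxy
  have := card_le_card (monotone_filter_right S fun z _ (hz : z ≤ x) => hz.trans hxy)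
  rw [← ofStarts_val_add_one h0 hS, ← ofStarts_val_add_one h0 hS] at this
  exact Fin.le_def.2 (by omega)

lemma starts_ofStarts : starts (ofStarts S h0 hS) = S := by
  ext x
  simp only [starts, mem_filter, mem_univ, true_and, ne_eq, ofStarts_eq_iff]
  constructor
  · intro hx
    by_contra hxS
    have hx0 : x ≠ 0 := fun h => hxS (h ▸ h0)
    have hxpos : 0 < (x : ℕ) := Nat.pos_of_ne_zero fun h => hx0 (Fin.ext (by simpa using h))
    refine hx ⟨(x : ℕ) - 1, by omega⟩ (Fin.lt_def.2 (show (x : ℕ) - 1 < x by omega))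
      (ext fun z => ?_)
    simp only [mem_filter, and_congr_right_iff, Fin.le_def]
    intro hz
    have : (z : ℕ) ≠ x := fun h => hxS (Fin.ext h ▸ hz)
    omega
  · intro hxS y hyx h
    have : x ∈ {z ∈ S | z ≤ y} := h ▸ mem_filter.2 ⟨hxS, le_rfl⟩
    exact (mem_filter.1 this).2.not_gt hyx

lemma surjective_ofStarts : Surjective (ofStarts S h0 hS) := by
  have h := card_image_of_injOn (injOn_starts (ofStarts S h0 hS))
  rw [starts_ofStarts] at h
  have himage := (card_eq_iff_eq_univ _).1 ((h.trans hS).trans (Fintype.card_fin b).symm)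
  intro i
  have hi : i ∈ S.image (ofStarts S h0 hS) := himage ▸ mem_univ i
  obtain ⟨x, -, hx⟩ := mem_image.1 hi
  exact ⟨x, hx⟩

end OfStarts

section Counting

variable {l m n : ℕ}

lemma exists_monotone_comp_eq {α β γ : Type*} [LinearOrder α] [PartialOrder β] [Preorder γ]
    {t : α → β} {u : α → γ} (htm : Monotone t) (hts : Surjective t) (hu : Monotone u)
    (h : ∀ x y, t x = t y → u x = u y) : ∃ s : β → γ, Monotone s ∧ s ∘ t = u := by
  have hs : ∀ x, u (surjInv hts (t x)) = u x := fun x => h _ _ (surjInv_eq hts (t x))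
  refine ⟨u ∘ surjInv hts, fun i j hij => ?_, funext hs⟩
  obtain ⟨x, rfl⟩ := hts i
  obtain ⟨y, rfl⟩ := hts j
  simp only [comp_apply, hs]
  rcases le_total x y with hxy | hyx
  · exact hu hxy
  · exact (h x y (le_antisymm hij (htm hyx))).le

/-- `s ∘ t = u` determines `s` from `t`, and `u` factors through `t` iff the blocks of `t`
refine those of `u`. -/
lemma card_factorizations_eq {u : Fin l → Fin n} (hu : u ∈ OSurj l n) :
    #{p ∈ OSurj m n ×ˢ OSurj l m | p.1 ∘ p.2 = u} = #{t ∈ OSurj l m | starts u ⊆ starts t} := by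
  rw [mem_OSurj] at hu
  refine card_bij (fun p _ => p.2) (fun p hp => ?_) (fun p hp q hq hpq => ?_) fun t ht => ?_
  · simp only [mem_filter, mem_product] at hp ⊢
    refine ⟨hp.1.2, starts_subset_of_factors fun x y hxy => ?_⟩
    rw [← hp.2, comp_apply, comp_apply, hxy]
  · simp only [mem_filter, mem_product] at hp hq
    refine Prod.ext ((mem_OSurj.1 hp.1.2).2.injective_comp_right ?_) hpq
    change p.1 ∘ p.2 = q.1 ∘ p.2
    rw [hp.2, hpq, hq.2]
  · simp only [mem_filter, mem_OSurj] at ht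
    obtain ⟨⟨htm, hts⟩, hsub⟩ := ht
    obtain ⟨s, hsm, hst⟩ := exists_monotone_comp_eq htm hts hu.1
      fun x y => factors_of_starts_subset htm hts hu.1 hu.2 hsub
    have hss : Surjective s := Surjective.of_comp (hst ▸ hu.2)
    exact ⟨(s, t), by simp [mem_OSurj, hsm, hss, htm, hts, hst], rfl⟩

/-- A monotone surjection refining `u` is determined by the `m - n` block starts it adds. -/
lemma card_refinements [NeZero l] (hnm : n ≤ m) {u : Fin l → Fin n} (hu : u ∈ OSurj l n) :
    #{t ∈ OSurj l m | starts u ⊆ starts t} = (l - n).choose (m - n) := by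
  rw [mem_OSurj] at hu
  calc #{t ∈ OSurj l m | starts u ⊆ starts t}
      = #(powersetCard (m - n) (starts u)ᶜ) := by
        refine card_bij (fun t _ => starts t \ starts u) (fun t ht => ?_)
          (fun t ht t' ht' htt' => ?_) fun B hB => ?_
        · simp only [mem_filter, mem_OSurj] at ht
          rw [mem_powersetCard, card_sdiff_of_subset ht.2, card_starts ht.1.2, card_starts hu.2]
          exact ⟨fun x hx => mem_compl.2 (mem_sdiff.1 hx).2, rfl⟩
        · simp only [mem_filter, mem_OSurj] at ht ht'
          refine eq_of_starts_eq ht.1.1 ht.1.2 ht'.1.1 ht'.1.2 ?_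
          rw [← sdiff_union_of_subset ht.2, ← sdiff_union_of_subset ht'.2, htt']
        · obtain ⟨hBsub, hBcard⟩ := mem_powersetCard.1 hB
          have hdisj : Disjoint B (starts u) := disjoint_left.2 fun x hx => mem_compl.1 (hBsub hx)
          have h0 : 0 ∈ B ∪ starts u := mem_union_right _ (zero_mem_starts u)
          have hcard : #(B ∪ starts u) = m := by
            rw [card_union_of_disjoint hdisj, hBcard, card_starts hu.2]
            omega
          refine ⟨ofStarts _ h0 hcard, ?_, ?_⟩
          · simp only [mem_filter, mem_OSurj, starts_ofStarts]
            exact ⟨⟨monotone_ofStarts h0 hcard, surjective_ofStarts h0 hcard⟩,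
              subset_union_right⟩
          · rw [starts_ofStarts, union_sdiff_cancel_right hdisj]
    _ = (l - n).choose (m - n) := by
        rw [card_powersetCard, card_compl, card_starts hu.2, Fintype.card_fin]

lemma sum_OSurj_comp [NeZero l] (hnm : n ≤ m) {γ : Type*} [AddCommMonoid γ]
    (F : (Fin l → Fin n) → γ) :
    ∑ s ∈ OSurj m n, ∑ t ∈ OSurj l m, F (s ∘ t) =
      (l - n).choose (m - n) • ∑ u ∈ OSurj l n, F u := by
  rw [← sum_product', ← sum_fiberwise_of_maps_to (g := fun p => p.1 ∘ p.2) (t := OSurj l n)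
    fun p hp => comp_mem_OSurj (mem_product.1 hp).1 (mem_product.1 hp).2, smul_sum]
  refine sum_congr rfl fun u hu => ?_
  rw [sum_congr rfl fun p hp => by rw [(mem_filter.1 hp).2], sum_const,
    card_factorizations_eq hu, card_refinements hnm hu]

lemma card_OSurj_mul_card_OSurj [NeZero l] (hnm : n ≤ m) :
    #(OSurj m n) * #(OSurj l m) = (l - n).choose (m - n) * #(OSurj l n) := by
  simpa only [sum_const, smul_eq_mul, mul_one] using
    sum_OSurj_comp (l := l) hnm fun _ => (1 : ℕ)

end Counting

section Composition

variable (K : Type) [Field K] [CharZero K] {l m n : ℕ}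

theorem starComp_Q_Q (hn : 1 ≤ n) (hm : n ≤ m) (hl : m ≤ l) :
    starComp K m n l (Q K m n) (Q K l m) = Q K l n := by
  have : NeZero l := ⟨by omega⟩
  have hC : ((l - n).choose (m - n) : K) ≠ 0 := Nat.cast_ne_zero.2 (Nat.choose_pos (by omega)).ne'
  rw [starComp_Q_Q_eq_sum_starElt, sum_congr rfl fun s _ => sum_starElt_OSurj K s,
    sum_OSurj_comp hm fun u => Finsupp.single (proj u) (1 : K), ← Nat.cast_smul_eq_nsmul K,
    smul_smul, Q, ← Nat.cast_mul, card_OSurj_mul_card_OSurj hm, Nat.cast_mul]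
  congr 1
  field_simp

end Composition

section Multiset

open Multiset

lemma card_le_sum_of_forall_one_le {s : Multiset ℕ} (h : ∀ x ∈ s, 1 ≤ x) : card s ≤ s.sum := by
  simpa using Multiset.card_nsmul_le_sum h

lemma eq_replicate_one_of_sum_le_card {s : Multiset ℕ} (hpos : ∀ x ∈ s, 1 ≤ x)
    (hsum : s.sum ≤ card s) : s = replicate (card s) 1 := by
  refine eq_replicate_card.2 fun x hx => le_antisymm ?_ (hpos x hx)
  have hrest := card_le_sum_of_forall_one_le (s := s.erase x) fun y hy =>
    hpos y (mem_of_mem_erase hy)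
  rw [← cons_erase hx, Multiset.sum_cons, Multiset.card_cons] at hsum
  omega

lemma eq_two_cons_replicate_one_of_sum_eq {s : Multiset ℕ} (hpos : ∀ x ∈ s, 1 ≤ x)
    (hsum : s.sum = card s + 1) : s = 2 ::ₘ replicate (card s - 1) 1 := by
  obtain ⟨x, hx, hx1⟩ : ∃ x ∈ s, x ≠ 1 := by
    by_contra! h
    rw [eq_replicate_card.2 h, sum_replicate, smul_eq_mul, mul_one, card_replicate] at hsum
    omega
  have hrest := card_le_sum_of_forall_one_le (s := s.erase x) fun y hy =>
    hpos y (mem_of_mem_erase hy)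
  rw [← cons_erase hx, Multiset.sum_cons, Multiset.card_cons] at hsum
  have hx2 : x = 2 := by have := hpos x hx; omega
  have hrest_eq := eq_replicate_one_of_sum_le_card
    (fun y hy => hpos y (mem_of_mem_erase hy)) (by omega : (s.erase x).sum ≤ card (s.erase x))
  calc s = x ::ₘ s.erase x := (cons_erase hx).symm
    _ = 2 ::ₘ replicate (card s - 1) 1 := by
      rw [hrest_eq, Multiset.card_erase_of_mem hx, Nat.pred_eq_sub_one, hx2]

end Multiset

section Endpoints

variable (K : Type) [Field K] [CharZero K] {a b : ℕ}

lemma proj_eq_replicate_one {f : Fin a → Fin b} (hf : Surjective f) (hab : a ≤ b) :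
    proj f = Multiset.replicate b 1 := by
  simpa [card_proj] using
    eq_replicate_one_of_sum_le_card (fun _ => one_le_of_mem_proj hf)
      (by simpa [card_proj, sum_proj])

lemma proj_eq_two_cons_replicate_one {f : Fin (b + 1) → Fin b} (hf : Surjective f) :
    proj f = 2 ::ₘ Multiset.replicate (b - 1) 1 := by
  simpa [card_proj] using
    eq_two_cons_replicate_one_of_sum_eq (fun _ => one_le_of_mem_proj hf)
      (by simp [card_proj, sum_proj])

lemma Q_eq_single (hne : (OSurj a b).Nonempty) {μ : Multiset ℕ}
    (h : ∀ s ∈ OSurj a b, proj s = μ) : Q K a b = Finsupp.single μ 1 := by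
  rw [Q, sum_congr rfl fun s hs => by rw [h s hs], sum_const, ← Nat.cast_smul_eq_nsmul K,
    smul_smul, inv_mul_cancel₀ (Nat.cast_ne_zero.2 hne.card_pos.ne'), one_smul]

lemma Q_self (n : ℕ) : Q K n n = Finsupp.single (Multiset.replicate n 1) 1 :=
  Q_eq_single K ⟨id, mem_OSurj.2 ⟨monotone_id, surjective_id⟩⟩ fun _ hs =>
    proj_eq_replicate_one (mem_OSurj.1 hs).2 le_rfl

lemma Q_succ_self (hb : 1 ≤ b) :
    Q K (b + 1) b = Finsupp.single (2 ::ₘ Multiset.replicate (b - 1) 1) 1 :=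
  Q_eq_single K (OSurj_nonempty hb (Nat.le_succ b)) fun _ hs =>
    proj_eq_two_cons_replicate_one (mem_OSurj.1 hs).2

end Endpoints

lemma Ppart_eq_Q (K : Type) [Field K] [CharZero K] {n : ℕ} (hn : 1 ≤ n) (k : ℕ) :
    Ppart K n k = Q K (n + k) n := by
  induction k with
  | zero => exact (Q_self K n).symm
  | succ k ih =>
    rw [Ppart, ih, ← Q_succ_self K (by omega : 1 ≤ n + k), starComp_Q_Q K hn (by omega) (by omega)]
    rfl

/-- for `l ≥ m ≥ n ≥ 1`, the uniform averages over order-preserving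
surjections compose to a uniform average, `Q_{m,n} * Q_{l,m} = Q_{l,n}`; in
particular the element `P_{m,n} = P_{n+1,n} * … * P_{m,m−1}` (with
`P_{n,n} = δ_{(1^n)}` and `P_{m,m−1} = δ_{(2,1^{m−2})}`, encoded by
`Ppart K n (m − n)`) equals `Q_{m,n}`. -/
theorem stmt13 (K : Type) [Field K] [CharZero K] {l m n : ℕ}
    (hn : 1 ≤ n) (hm : n ≤ m) (hl : m ≤ l) :
    starComp K m n l (Q K m n) (Q K l m) = Q K l n ∧
    Ppart K n (m - n) = Q K m n := by
  refine ⟨starComp_Q_Q K hn hm hl, ?_⟩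
  rw [Ppart_eq_Q K hn, Nat.add_sub_cancel' hm]
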